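/- arXiv:2408.10666 — 3 statements merged into one kernel-verified Lean document; each statement's English description precedes it below -/
import Mathlib

section
/- Let G_U ∈ ℝ^{n×d} be the matrix whose u-th row is the gradient g_u of the BCE recommendation loss L with respect to the user representation r_u, and let V ∈ ℝ^{m×d} be the matrix whose i-th row is the item representation r_i. Then G_U = −P^grad(R) · V, i.e., the stacked user gradients equal minus the matrix product of P^grad(R) with the stacked item representations. -/
open Matrix Finset

noncomputable section

/-- The sigmoid function `σ(x) = 1 / (1 + e^{-x})`. -/
def sigmoid (x : ℝ) : ℝ := 1 / (1 + Real.exp (-x))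

/-- The softplus function `softplus(x) = log(1 + e^x)`. -/
def softplus (x : ℝ) : ℝ := Real.log (1 + Real.exp x)

/-- Dot product between the user row `u` (among the first `n` rows, encoded as `Sum.inl`)
and the item row `i` (among the last `m` rows, encoded as `Sum.inr`) of the
representation matrix `R`. -/
def rowDot {n m d : ℕ} (R : Matrix (Fin n ⊕ Fin m) (Fin d) ℝ)
    (u : Fin n) (i : Fin m) : ℝ :=
  ∑ j, R (Sum.inl u) j * R (Sum.inr i) j

/-- The BCE recommendation loss
`L(R) = Σ_{(u,i)∈Ω} softplus(−⟨r_u, r_i⟩) + β · Σ_{(u,i)∉Ω} softplus(⟨r_u, r_i⟩)`. -/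
def bceLoss {n m d : ℕ} (Ω : Finset (Fin n × Fin m)) (β : ℝ)
    (R : Matrix (Fin n ⊕ Fin m) (Fin d) ℝ) : ℝ :=
  (∑ p ∈ Ω, softplus (-(rowDot R p.1 p.2)))
    + β * ∑ p ∈ Ωᶜ, softplus (rowDot R p.1 p.2)

/-- The partial derivative of `f` at `R` with respect to the `(k, j)` entry,
all other entries held fixed. -/
def pderivEntry {n m d : ℕ} (f : Matrix (Fin n ⊕ Fin m) (Fin d) ℝ → ℝ)
    (R : Matrix (Fin n ⊕ Fin m) (Fin d) ℝ) (k : Fin n ⊕ Fin m) (j : Fin d) : ℝ :=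
  deriv (fun t : ℝ => f (R + t • Matrix.single k j (1 : ℝ))) 0

/-- The matrix `P^grad(R) ∈ ℝ^{n×m}` with entries `σ(−⟨r_u, r_i⟩)` for `(u,i) ∈ Ω`
and `−β·σ(⟨r_u, r_i⟩)` otherwise. -/
def Pgrad {n m d : ℕ} (Ω : Finset (Fin n × Fin m)) (β : ℝ)
    (R : Matrix (Fin n ⊕ Fin m) (Fin d) ℝ) : Matrix (Fin n) (Fin m) ℝ :=
  Matrix.of fun u i =>
    if (u, i) ∈ Ω then sigmoid (-(rowDot R u i)) else -β * sigmoid (rowDot R u i)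

/-! `L` is a sum over pairs `p = (u, i)` of scalar functions `ℓ_p` of the score `⟨r_u, r_i⟩`,
with `ℓ_p' = -P^grad_p`. Moving the entry `(u, j)` of `R` changes only the scores `⟨r_u, r_i⟩`,
each linearly with slope `r_i j`, so the chain rule gives `∂L/∂R_{u j} = -∑_i P^grad_{u i} r_i j`. -/

def bceTerm {n m : ℕ} (Ω : Finset (Fin n × Fin m)) (β : ℝ) (p : Fin n × Fin m) (x : ℝ) : ℝ :=
  if p ∈ Ω then softplus (-x) else β * softplus x

def bceWeight {n m : ℕ} (Ω : Finset (Fin n × Fin m)) (β : ℝ) (p : Fin n × Fin m) (x : ℝ) : ℝ :=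
  if p ∈ Ω then sigmoid (-x) else -β * sigmoid x

theorem Pgrad_apply {n m d : ℕ} (Ω : Finset (Fin n × Fin m)) (β : ℝ)
    (R : Matrix (Fin n ⊕ Fin m) (Fin d) ℝ) (u : Fin n) (i : Fin m) :
    Pgrad Ω β R u i = bceWeight Ω β (u, i) (rowDot R u i) :=
  rfl

theorem hasDerivAt_softplus (x : ℝ) : HasDerivAt softplus (sigmoid x) x := by
  have hσ : sigmoid x = Real.exp x / (1 + Real.exp x) := by
    rw [sigmoid, Real.exp_neg]
    field_simp
    ring
  rw [hσ]
  exact ((Real.hasDerivAt_exp x).const_add 1).log (by positivity)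

theorem hasDerivAt_bceTerm {n m : ℕ} (Ω : Finset (Fin n × Fin m)) (β : ℝ)
    (p : Fin n × Fin m) (x : ℝ) :
    HasDerivAt (bceTerm Ω β p) (-bceWeight Ω β p x) x := by
  unfold bceTerm bceWeight
  split_ifs
  · simpa [Function.comp_def] using (hasDerivAt_softplus (-x)).comp x (hasDerivAt_neg x)
  · simpa using (hasDerivAt_softplus x).const_mul β

theorem bceLoss_eq_sum_bceTerm {n m d : ℕ} (Ω : Finset (Fin n × Fin m)) (β : ℝ)
    (R : Matrix (Fin n ⊕ Fin m) (Fin d) ℝ) :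
    bceLoss Ω β R = ∑ p, bceTerm Ω β p (rowDot R p.1 p.2) := by
  simp only [bceLoss, bceTerm, Finset.sum_ite, Finset.mul_sum, Finset.filter_mem_eq_inter,
    Finset.univ_inter, ← Finset.compl_filter]

theorem rowDot_add_smul_single_inl {n m d : ℕ} (R : Matrix (Fin n ⊕ Fin m) (Fin d) ℝ)
    (u : Fin n) (j : Fin d) (t : ℝ) (v : Fin n) (i : Fin m) :
    rowDot (R + t • Matrix.single (Sum.inl u) j 1) v i
      = rowDot R v i + t * (if v = u then R (Sum.inr i) j else 0) := by
  by_cases hv : v = u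
  · subst hv
    simp [rowDot, Matrix.single_apply, add_mul, Finset.sum_add_distrib]
  · simp [rowDot, hv, Ne.symm hv]

theorem pderivEntry_bceLoss_inl {n m d : ℕ} (Ω : Finset (Fin n × Fin m)) (β : ℝ)
    (R : Matrix (Fin n ⊕ Fin m) (Fin d) ℝ) (u : Fin n) (j : Fin d) :
    pderivEntry (bceLoss Ω β) R (Sum.inl u) j = -∑ i, Pgrad Ω β R u i * R (Sum.inr i) j := by
  set a : Fin n × Fin m → ℝ := fun p => if p.1 = u then R (Sum.inr p.2) j else 0
  have hpath : ∀ t : ℝ, bceLoss Ω β (R + t • Matrix.single (Sum.inl u) j 1)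
      = ∑ p, bceTerm Ω β p (rowDot R p.1 p.2 + t * a p) := fun t => by
    simp only [bceLoss_eq_sum_bceTerm, rowDot_add_smul_single_inl, a]
  have hderiv : HasDerivAt (fun t : ℝ => ∑ p, bceTerm Ω β p (rowDot R p.1 p.2 + t * a p))
      (∑ p, -bceWeight Ω β p (rowDot R p.1 p.2) * a p) 0 := by
    refine HasDerivAt.fun_sum fun p _ => ?_
    have hline : HasDerivAt (fun t : ℝ => rowDot R p.1 p.2 + t * a p) (a p) 0 := by
      simpa using ((hasDerivAt_id (0 : ℝ)).mul_const (a p)).const_add (rowDot R p.1 p.2)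
    exact (hasDerivAt_bceTerm Ω β p _).comp_of_eq 0 hline (by simp)
  rw [pderivEntry, funext hpath, hderiv.deriv]
  simp [a, Fintype.sum_prod_type, mul_ite, Pgrad_apply, Finset.sum_neg_distrib]

theorem stacked_user_gradients_eq_general {n m d : ℕ}
    (Ω : Finset (Fin n × Fin m)) (β : ℝ)
    (R : Matrix (Fin n ⊕ Fin m) (Fin d) ℝ) :
    (Matrix.of fun (u : Fin n) (j : Fin d) => pderivEntry (bceLoss Ω β) R (Sum.inl u) j)
      = -(Pgrad Ω β R * Matrix.of fun (i : Fin m) (j : Fin d) => R (Sum.inr i) j) := by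
  ext u j
  simp [Matrix.mul_apply, pderivEntry_bceLoss_inl]

/-- The stacked user gradients `G_U ∈ ℝ^{n×d}` (whose `u`-th row is the gradient of
the BCE loss with respect to `r_u`) equal `−P^grad(R) · V`, where `V ∈ ℝ^{m×d}`
stacks the item representations. -/
theorem stacked_user_gradients_eq {n m d : ℕ} (hn : 0 < n) (hm : 0 < m) (hd : 0 < d)
    (Ω : Finset (Fin n × Fin m)) (β : ℝ)
    (R : Matrix (Fin n ⊕ Fin m) (Fin d) ℝ) :
    (Matrix.of fun (u : Fin n) (j : Fin d) => pderivEntry (bceLoss Ω β) R (Sum.inl u) j)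
      = -(Pgrad Ω β R * Matrix.of fun (i : Fin m) (j : Fin d) => R (Sum.inr i) j) :=
  stacked_user_gradients_eq_general Ω β R
end
end

section
/- Let G_I ∈ ℝ^{m×d} be the matrix whose i-th row is the gradient g_i of the BCE recommendation loss L with respect to the item representation r_i, and let U ∈ ℝ^{n×d} be the matrix whose u-th row is the user representation r_u. Then G_I = −(P^grad(R))^T · U, i.e., the stacked item gradients equal minus the matrix product of the transpose of P^grad(R) with the stacked user representations. -/
/-! The loss is a sum over pairs `(u, i)` of a scalar function of the score `⟨r_u, r_i⟩`
whose derivative there is `-P^grad_{u,i}`. Moving the entry `(i, j)` of `R` changes only the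
scores `⟨r_u, r_i⟩`, each at rate `R_{u,j}`, so the chain rule gives
`∂L/∂R_{i,j} = -Σ_u P^grad_{u,i} R_{u,j}`. -/

open Matrix Finset

noncomputable section

section

variable {n m d : ℕ}

/-- The loss contributed by the pair `p` as a function of the score `x = ⟨r_u, r_i⟩`. -/
def pairLoss (Ω : Finset (Fin n × Fin m)) (β : ℝ) (p : Fin n × Fin m) (x : ℝ) : ℝ :=
  if p ∈ Ω then softplus (-x) else β * softplus x

theorem bceLoss_eq_sum_pairLoss (Ω : Finset (Fin n × Fin m)) (β : ℝ)
    (R : Matrix (Fin n ⊕ Fin m) (Fin d) ℝ) :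
    bceLoss Ω β R = ∑ p, pairLoss Ω β p (rowDot R p.1 p.2) := by
  simp only [pairLoss, Finset.sum_ite, ← Finset.mul_sum, bceLoss]
  congr 3 <;> ext p <;> simp

theorem hasDerivAt_pairLoss (Ω : Finset (Fin n × Fin m)) (β : ℝ) (p : Fin n × Fin m)
    (x : ℝ) :
    HasDerivAt (pairLoss Ω β p)
      (-(if p ∈ Ω then sigmoid (-x) else -β * sigmoid x)) x := by
  unfold pairLoss
  split_ifs
  · simpa [Function.comp_def] using (hasDerivAt_softplus (-x)).comp x (hasDerivAt_neg x)
  · simpa using (hasDerivAt_softplus x).const_mul β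

theorem rowDot_add_smul_single_inr (R : Matrix (Fin n ⊕ Fin m) (Fin d) ℝ)
    (i : Fin m) (j : Fin d) (t : ℝ) (u : Fin n) (i' : Fin m) :
    rowDot (R + t • Matrix.single (Sum.inr i) j 1) u i'
      = rowDot R u i' + t * (if i' = i then R (Sum.inl u) j else 0) := by
  by_cases h : i' = i
  · subst h
    simp [rowDot, Matrix.single_apply, mul_add, Finset.sum_add_distrib, mul_comm]
  · simp [rowDot, h, Ne.symm h]

theorem pderivEntry_sum_rowDot_inr (φ : Fin n × Fin m → ℝ → ℝ)
    (φ' : Fin n × Fin m → ℝ) (R : Matrix (Fin n ⊕ Fin m) (Fin d) ℝ)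
    (hφ : ∀ p, HasDerivAt (φ p) (φ' p) (rowDot R p.1 p.2)) (i : Fin m) (j : Fin d) :
    pderivEntry (fun R => ∑ p, φ p (rowDot R p.1 p.2)) R (Sum.inr i) j
      = ∑ u, φ' (u, i) * R (Sum.inl u) j := by
  have hsum :
      HasDerivAt (fun t : ℝ => ∑ p, φ p (rowDot (R + t • single (Sum.inr i) j 1) p.1 p.2))
      (∑ p, φ' p * (if p.2 = i then R (Sum.inl p.1) j else 0)) 0 := by
    refine HasDerivAt.fun_sum fun p _ => ?_
    simp only [rowDot_add_smul_single_inr]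
    have hline (a c : ℝ) : HasDerivAt (fun t : ℝ => a + t * c) c 0 := by
      simpa using ((hasDerivAt_id (0 : ℝ)).mul_const c).const_add a
    exact (hφ p).comp_of_eq 0 (hline _ _) (by simp)
  rw [pderivEntry, hsum.deriv, Fintype.sum_prod_type]
  simp [mul_ite]

end

theorem stacked_item_gradients_eq_general {n m d : ℕ}
    (Ω : Finset (Fin n × Fin m)) (β : ℝ)
    (R : Matrix (Fin n ⊕ Fin m) (Fin d) ℝ) :
    (Matrix.of fun (i : Fin m) (j : Fin d) => pderivEntry (bceLoss Ω β) R (Sum.inr i) j)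
      = -((Pgrad Ω β R)ᵀ * Matrix.of fun (u : Fin n) (j : Fin d) => R (Sum.inl u) j) := by
  ext i j
  have hloss : bceLoss (d := d) Ω β = fun R => ∑ p, pairLoss Ω β p (rowDot R p.1 p.2) :=
    funext fun R => bceLoss_eq_sum_pairLoss Ω β R
  rw [Matrix.of_apply, hloss,
    pderivEntry_sum_rowDot_inr _ _ R (fun p => hasDerivAt_pairLoss Ω β p _)]
  simp [Matrix.mul_apply, Pgrad, Finset.sum_neg_distrib]

/-- The stacked item gradients `G_I ∈ ℝ^{m×d}` (whose `i`-th row is the gradient of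
the BCE loss with respect to `r_i`) equal `−(P^grad(R))ᵀ · U`, where `U ∈ ℝ^{n×d}`
stacks the user representations. -/
theorem stacked_item_gradients_eq {n m d : ℕ} (hn : 0 < n) (hm : 0 < m) (hd : 0 < d)
    (Ω : Finset (Fin n × Fin m)) (β : ℝ)
    (R : Matrix (Fin n ⊕ Fin m) (Fin d) ℝ) :
    (Matrix.of fun (i : Fin m) (j : Fin d) => pderivEntry (bceLoss Ω β) R (Sum.inr i) j)
      = -((Pgrad Ω β R)ᵀ * Matrix.of fun (u : Fin n) (j : Fin d) => R (Sum.inl u) j) :=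
  stacked_item_gradients_eq_general Ω β R
end
end

section
/- (Lemma 1) The gradient of the BCE recommendation loss with respect to the full representation matrix R satisfies ∇_R L(R) = −A^grad(R) · R, where A^grad(R) ∈ ℝ^{(n+m)×(n+m)} is the block anti-diagonal matrix with upper-right block P^grad(R) and lower-left block (P^grad(R))^T; that is, the gradient can be computed by message-passing of the representations through the matrix A^grad(R). -/
open Matrix Finset

noncomputable section

/-- The block anti-diagonal matrix `A^grad(R) = [[0, P^grad(R)], [(P^grad(R))ᵀ, 0]]`. -/
def Agrad {n m d : ℕ} (Ω : Finset (Fin n × Fin m)) (β : ℝ)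
    (R : Matrix (Fin n ⊕ Fin m) (Fin d) ℝ) :
    Matrix (Fin n ⊕ Fin m) (Fin n ⊕ Fin m) ℝ :=
  Matrix.fromBlocks 0 (Pgrad Ω β R) (Pgrad Ω β R)ᵀ 0

/-- The gradient `∇_R L(R) ∈ ℝ^{(n+m)×d}`: the matrix whose `(k, j)` entry is the
partial derivative of the BCE loss with respect to `R_{k,j}`. -/
def gradLoss {n m d : ℕ} (Ω : Finset (Fin n × Fin m)) (β : ℝ)
    (R : Matrix (Fin n ⊕ Fin m) (Fin d) ℝ) : Matrix (Fin n ⊕ Fin m) (Fin d) ℝ :=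
  Matrix.of fun k j => pderivEntry (bceLoss Ω β) R k j

/-! Each entry of `∇L` is the derivative of `L` along a matrix unit, so it suffices to compute the
derivative along an arbitrary direction `E`. Along `E` the score `⟨r_u, r_i⟩` moves at rate
`⟨e_u, r_i⟩ + ⟨r_u, e_i⟩`, and `softplus' = σ`; the chain rule turns the derivative of `L` into
`-Σ_{u,i} P^grad_{u,i} (⟨e_u, r_i⟩ + ⟨r_u, e_i⟩)`, which regroups as the Frobenius pairing of `E`
with `-A^grad R`. For `E` a matrix unit this pairing is an entry of `-A^grad R`. -/

theorem sigmoid_eq_exp_div (x : ℝ) : sigmoid x = Real.exp x / (1 + Real.exp x) := by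
  rw [sigmoid, Real.exp_neg]
  field_simp
  ring

section Pairing

variable {ι κ δ α : Type*} [Fintype ι] [Fintype κ] [Fintype δ] [CommSemiring α]

/-- `rowDot R = userItemPairing R R` holds definitionally. -/
def userItemPairing (R S : Matrix (ι ⊕ κ) δ α) (u : ι) (i : κ) : α :=
  ∑ j, R (Sum.inl u) j * S (Sum.inr i) j

theorem sum_mul_userItemPairing_add (P : Matrix ι κ α) (R E : Matrix (ι ⊕ κ) δ α) :
    ∑ u, ∑ i, P u i * (userItemPairing E R u i + userItemPairing R E u i) =
      ∑ k, ∑ j, E k j * (fromBlocks 0 P Pᵀ 0 * R) k j := by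
  simp only [userItemPairing, mul_add, Finset.sum_add_distrib, Fintype.sum_sum_type, mul_apply,
    fromBlocks_apply₁₁, fromBlocks_apply₁₂, fromBlocks_apply₂₁, fromBlocks_apply₂₂,
    Matrix.zero_apply, transpose_apply, zero_mul, mul_zero, Finset.sum_const_zero, zero_add,
    add_zero, Finset.mul_sum]
  rw [add_comm]
  congr 1
  · rw [Finset.sum_comm]
    refine Finset.sum_congr rfl fun i _ => ?_
    rw [Finset.sum_comm]
    exact Finset.sum_congr rfl fun j _ => Finset.sum_congr rfl fun u _ => by ring
  · refine Finset.sum_congr rfl fun u _ => ?_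
    rw [Finset.sum_comm]
    exact Finset.sum_congr rfl fun j _ => Finset.sum_congr rfl fun i _ => by ring

end Pairing

theorem hasLineDerivAt_rowDot {n m d : ℕ} (R E : Matrix (Fin n ⊕ Fin m) (Fin d) ℝ)
    (u : Fin n) (i : Fin m) :
    HasLineDerivAt ℝ (fun S => rowDot S u i)
      (userItemPairing E R u i + userItemPairing R E u i) R E := by
  change HasDerivAt (fun t : ℝ => rowDot (R + t • E) u i) _ 0
  simp only [rowDot, userItemPairing, Matrix.add_apply, Matrix.smul_apply, smul_eq_mul,
    ← Finset.sum_add_distrib]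
  refine HasDerivAt.fun_sum fun j _ => ?_
  simpa using (((hasDerivAt_id (0 : ℝ)).mul_const (E (Sum.inl u) j)).const_add
    (R (Sum.inl u) j)).fun_mul (((hasDerivAt_id (0 : ℝ)).mul_const (E (Sum.inr i) j)).const_add
    (R (Sum.inr i) j))

theorem HasLineDerivAt.softplus {E : Type*} [AddCommGroup E] [Module ℝ E]
    {f : E → ℝ} {f' : ℝ} {x v : E} (hf : HasLineDerivAt ℝ f f' x v) :
    HasLineDerivAt ℝ (fun y => softplus (f y)) (sigmoid (f x) * f') x v := by
  change HasDerivAt (_root_.softplus ∘ fun t : ℝ => f (x + t • v)) _ 0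
  exact (hasDerivAt_softplus (f x)).comp_of_eq 0 hf (by simp)

theorem neg_sum_Pgrad_mul {n m d : ℕ} (Ω : Finset (Fin n × Fin m)) (β : ℝ)
    (R : Matrix (Fin n ⊕ Fin m) (Fin d) ℝ) (f : Fin n × Fin m → ℝ) :
    -∑ p, Pgrad Ω β R p.1 p.2 * f p =
      ∑ p ∈ Ω, sigmoid (-rowDot R p.1 p.2) * -f p
        + β * ∑ p ∈ Ωᶜ, sigmoid (rowDot R p.1 p.2) * f p := by
  rw [← Finset.sum_add_sum_compl Ω, neg_add, ← Finset.sum_neg_distrib, ← Finset.sum_neg_distrib,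
    Finset.mul_sum]
  congr 1 <;> refine Finset.sum_congr rfl fun p hp => ?_
  · simp only [Pgrad, of_apply, if_pos hp]
    ring
  · simp only [Pgrad, of_apply, if_neg (Finset.mem_compl.mp hp)]
    ring

theorem hasLineDerivAt_bceLoss {n m d : ℕ} (Ω : Finset (Fin n × Fin m)) (β : ℝ)
    (R E : Matrix (Fin n ⊕ Fin m) (Fin d) ℝ) :
    HasLineDerivAt ℝ (bceLoss Ω β) (-∑ k, ∑ j, E k j * (Agrad Ω β R * R) k j) R E := by
  let D : Fin n × Fin m → ℝ := fun p => userItemPairing E R p.1 p.2 + userItemPairing R E p.1 p.2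
  have hout (p : Fin n × Fin m) : HasLineDerivAt ℝ (fun S => softplus (rowDot S p.1 p.2))
      (sigmoid (rowDot R p.1 p.2) * D p) R E :=
    (hasLineDerivAt_rowDot R E p.1 p.2).softplus
  have hin (p : Fin n × Fin m) : HasLineDerivAt ℝ (fun S => softplus (-rowDot S p.1 p.2))
      (sigmoid (-rowDot R p.1 p.2) * -D p) R E :=
    HasLineDerivAt.softplus (f := fun S => -rowDot S p.1 p.2)
      (hasLineDerivAt_rowDot R E p.1 p.2).neg
  have hL : HasLineDerivAt ℝ (bceLoss Ω β)
      (∑ p ∈ Ω, sigmoid (-rowDot R p.1 p.2) * -D p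
        + β * ∑ p ∈ Ωᶜ, sigmoid (rowDot R p.1 p.2) * D p) R E :=
    (HasDerivAt.fun_sum fun p _ => hin p).add ((HasDerivAt.fun_sum fun p _ => hout p).const_mul β)
  rw [← neg_sum_Pgrad_mul, Fintype.sum_prod_type] at hL
  rwa [Agrad, ← sum_mul_userItemPairing_add]

theorem gradLoss_eq_neg_Agrad_mul_general {n m d : ℕ}
    (Ω : Finset (Fin n × Fin m)) (β : ℝ)
    (R : Matrix (Fin n ⊕ Fin m) (Fin d) ℝ) :
    gradLoss Ω β R = -(Agrad Ω β R * R) := by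
  ext k j
  change lineDeriv ℝ (bceLoss Ω β) R (single k j 1) = _
  rw [(hasLineDerivAt_bceLoss Ω β R _).lineDeriv, neg_apply]
  simp only [single_apply, ite_and, ite_mul, one_mul, zero_mul, Finset.sum_ite_irrel,
    Finset.sum_const_zero, Finset.sum_ite_eq, Finset.mem_univ, if_true]

/-- (Lemma 1) The gradient of the BCE recommendation loss with respect to the full
representation matrix satisfies `∇_R L(R) = −A^grad(R) · R`: the gradient can be
computed by message-passing of the representations through `A^grad(R)`. -/
theorem gradLoss_eq_neg_Agrad_mul {n m d : ℕ} (hn : 0 < n) (hm : 0 < m) (hd : 0 < d)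
    (Ω : Finset (Fin n × Fin m)) (β : ℝ)
    (R : Matrix (Fin n ⊕ Fin m) (Fin d) ℝ) :
    gradLoss Ω β R = -(Agrad Ω β R * R) :=
  gradLoss_eq_neg_Agrad_mul_general Ω β R
end
end
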